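/- Let D be a Gauss code with chord set C and let x ∈ C with tail endpoint t. Let S₁ be the set of chords of D whose head occurs before its tail when the cyclic word is cut at t and read forward (starting with t), and let S₂ be the set of chords of D whose head occurs before its tail when the cyclic word is cut at t and read in the reverse direction (starting with t). Then S₁ and S₂ are disjoint, S₁ ∪ S₂ = C \ {x}, and the crossing change at S₁ (respectively at S₂) transforms D into a descending Gauss code. -/

import Mathlib

/-!
Gauss codes for welded knots.

A Gauss code is a cyclic word in which each chord label occurs exactly twice,
once as a tail (`isHead = false`) and once as a head (`isHead = true`), both
occurrences carrying the common sign of the chord.  We represent the cyclic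
word by a linear list of entries, working up to rotation (`List.rotate`) and
injective relabelling of the chords.
-/

/-- An endpoint of a chord: `(chord label, isHead, sign)`, where `isHead = false`
means a tail (over-passing) endpoint and `isHead = true` a head (under-passing)
endpoint, and the sign `true`/`false` stands for `+1`/`-1`. -/
abbrev GEntry : Type := ℕ × Bool × Bool

/-- A (linear representative of a cyclic) word of endpoints. -/
abbrev GWord : Type := List GEntry

/-- The set of chord labels occurring in a word. -/
def chordSet (w : GWord) : Set ℕ := {a | ∃ e ∈ w, e.1 = a}

/-- `w` is a Gauss code: every chord label that occurs in `w` occurs exactly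
twice, once as a tail and once as a head, with a common sign. -/
def IsGaussCode (w : GWord) : Prop :=
  ∀ a ∈ chordSet w,
    w.countP (fun e => e.1 == a) = 2 ∧
    ∃ s : Bool, (a, false, s) ∈ w ∧ (a, true, s) ∈ w

/-- The crossing change at the set `S` of chords: at every chord of `S`, the
tail and head markings of its two occurrences are exchanged and its sign is
reversed. -/
def crossingChange (S : Finset ℕ) (w : GWord) : GWord :=
  w.map fun e => if e.1 ∈ S then (e.1, !e.2.1, !e.2.2) else e

/-- Deletion of the chord `a` (both of its endpoints) from the word. -/
def deleteChord (a : ℕ) (w : GWord) : GWord :=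
  w.filter fun e => e.1 != a

/-- Equality of words up to cyclic permutation. -/
def RotEq (w w' : GWord) : Prop := ∃ n : ℕ, w' = w.rotate n

/-- Renaming the chords of a word by `f`. -/
def relabelWord (f : ℕ → ℕ) (w : GWord) : GWord := w.map fun e => (f e.1, e.2)

/-- Equality of words up to cyclic permutation and (injective) renaming of
the chords. -/
def CyclicRename (w w' : GWord) : Prop :=
  ∃ (n : ℕ) (f : ℕ → ℕ), Function.Injective f ∧ w' = relabelWord f (w.rotate n)

/-- Raw C1 move (deleting direction): deletion of a chord whose two endpoints
occupy adjacent positions; the inserting direction is the converse relation. -/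
def C1delRaw (u v : GWord) : Prop :=
  ∃ (x y : GWord) (a : ℕ) (h s : Bool),
    (∀ e ∈ x ++ y, e.1 ≠ a) ∧
    u = x ++ (a, h, s) :: (a, !h, s) :: y ∧
    v = x ++ y

/-- Raw W move: interchange of two adjacent endpoints that are both tails
(of any two chords, regardless of signs). -/
def WRaw (u v : GWord) : Prop :=
  ∃ (x y : GWord) (a b : ℕ) (s t : Bool),
    u = x ++ (a, false, s) :: (b, false, t) :: y ∧
    v = x ++ (b, false, t) :: (a, false, s) :: y

/-- Raw C2 move (deleting direction): deletion of a pair of chords of opposite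
signs whose two tails occupy adjacent positions and whose two heads occupy
adjacent positions. -/
def C2delRaw (u v : GWord) : Prop :=
  ∃ (x y z : GWord) (a b : ℕ) (s : Bool),
    a ≠ b ∧
    (∀ e ∈ x ++ y ++ z, e.1 ≠ a ∧ e.1 ≠ b) ∧
    (u = x ++ (a, false, s) :: (b, false, !s) :: (y ++ (a, true, s) :: (b, true, !s) :: z) ∨
     u = x ++ (a, false, s) :: (b, false, !s) :: (y ++ (b, true, !s) :: (a, true, s) :: z)) ∧
    v = x ++ y ++ z

/-- Raw C3 move: the Gauss-code translation of the planar Reidemeister move of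
type 3.  Three strands `A`, `B`, `C` (modelled on the lines `y = -1`, `y = x`,
`y = -x` and their directions `(1,0)`, `(1,1)`, `(-1,1)`, possibly reversed
according to `dA`, `dB`, `dC`) meet pairwise in the chords `a = AB`, `b = AC`,
`c = BC`; `oAB`, `oAC`, `oBC` record which strand passes over in each pair and
must come from a linear height order.  The six endpoints form three adjacent
pairs, one on each strand, and the move exchanges the order within each pair;
the head/tail pattern is determined by the heights and the signs by the heights
and the directions, as in a planar diagram. -/
def C3Raw (u v : GWord) : Prop :=
  ∃ (x y z t : GWord) (a b c : ℕ) (oAB oAC oBC dA dB dC swap : Bool),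
    a ≠ b ∧ a ≠ c ∧ b ≠ c ∧
    (oAB = oBC → oAC = oAB) ∧
    (let sa : Bool := (dA == dB) == oAB
     let sb : Bool := (dA == dC) == oAC
     let sc : Bool := (dB == dC) == oBC
     let PA : GWord :=
       if dA then [(a, !oAB, sa), (b, !oAC, sb)] else [(b, !oAC, sb), (a, !oAB, sa)]
     let PB : GWord :=
       if dB then [(a, oAB, sa), (c, !oBC, sc)] else [(c, !oBC, sc), (a, oAB, sa)]
     let PC : GWord :=
       if dC then [(b, oAC, sb), (c, oBC, sc)] else [(c, oBC, sc), (b, oAC, sb)]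
     let Q1 : GWord := if swap then PC else PB
     let Q2 : GWord := if swap then PB else PC
     u = x ++ PA ++ y ++ Q1 ++ z ++ Q2 ++ t ∧
     v = x ++ PA.reverse ++ y ++ Q1.reverse ++ z ++ Q2.reverse ++ t)

/-- One welded Reidemeister move (C1, C2, C3 or W, in either direction),
performed up to cyclic permutation and renaming of chords. -/
def WeldedStep (u v : GWord) : Prop :=
  ∃ u₀ v₀ : GWord, CyclicRename u u₀ ∧ CyclicRename v₀ v ∧
    (C1delRaw u₀ v₀ ∨ C1delRaw v₀ u₀ ∨ C2delRaw u₀ v₀ ∨ C2delRaw v₀ u₀ ∨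
     C3Raw u₀ v₀ ∨ C3Raw v₀ u₀ ∨ WRaw u₀ v₀)

/-- Welded equivalence: two Gauss codes are welded-equivalent if they are
related by a finite sequence of C1, C2, C3 and W moves (on cyclic words). -/
def WeldedEquiv : GWord → GWord → Prop := Relation.EqvGen WeldedStep

/-- A Gauss code represents the trivial welded knot iff it is
welded-equivalent to the empty code. -/
def RepresentsTrivial (w : GWord) : Prop := WeldedEquiv w []

/-- One C1 or W move (in either direction), up to cyclic permutation and
renaming of chords. -/
def CWStep (u v : GWord) : Prop :=
  ∃ u₀ v₀ : GWord, CyclicRename u u₀ ∧ CyclicRename v₀ v ∧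
    (C1delRaw u₀ v₀ ∨ C1delRaw v₀ u₀ ∨ WRaw u₀ v₀)

/-- Relatedness by a finite sequence of C1 and W moves alone. -/
def CWEquiv : GWord → GWord → Prop := Relation.EqvGen CWStep

/-- One W move, up to cyclic permutation. -/
def WStepRot (u v : GWord) : Prop :=
  ∃ u₀ v₀ : GWord, RotEq u u₀ ∧ RotEq v₀ v ∧ WRaw u₀ v₀

/-- One deleting C1 move, up to cyclic permutation. -/
def C1StepRot (u v : GWord) : Prop :=
  ∃ u₀ v₀ : GWord, RotEq u u₀ ∧ RotEq v₀ v ∧ C1delRaw u₀ v₀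

/-- In the linear word `v`, no chord has its head occurring strictly before
its tail. -/
def TailsFirst (v : GWord) : Prop :=
  ¬ ∃ (x y z : GWord) (a : ℕ) (s s' : Bool),
      v = x ++ (a, true, s) :: (y ++ (a, false, s') :: z)

/-- A Gauss code is descending if the cyclic word can be cut at some point and
read in one of the two directions so that every chord's tail occurs before its
head. -/
def IsDescending (w : GWord) : Prop :=
  ∃ n : ℕ, TailsFirst (w.rotate n) ∨ TailsFirst ((w.rotate n).reverse)

/-- `c(D)`: the minimal number of chords of a Gauss code representing the same
welded knot as `D`. -/
noncomputable def minCrossing (D : GWord) : ℕ :=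
  sInf {n : ℕ | ∃ D' : GWord, IsGaussCode D' ∧ WeldedEquiv D D' ∧ (chordSet D').ncard = n}

/-- `u(D)`: the minimal cardinality of a set `S` of chords of `D` such that the
crossing change at `S` turns `D` into a Gauss code representing the trivial
welded knot. -/
noncomputable def unknottingNumWord (D : GWord) : ℕ :=
  sInf {k : ℕ | ∃ S : Finset ℕ, ↑S ⊆ chordSet D ∧ S.card = k ∧
    WeldedEquiv (crossingChange S D) []}

/-- `u(K)`: the minimum of `u(D')` over all Gauss codes `D'` representing the
same welded knot as `D`. -/
noncomputable def unknottingNum (D : GWord) : ℕ :=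
  sInf {k : ℕ | ∃ D' : GWord, IsGaussCode D' ∧ WeldedEquiv D D' ∧ unknottingNumWord D' = k}

/-! Cutting at the tail of `x` and reading in the two directions reverses the order of the two
endpoints of every other chord, so each such chord has its head first in exactly one of the two
readings. The crossing change at the chords whose head comes first in a linear reading swaps
their endpoints, after which every tail precedes its head in that reading. -/

/-- In the linear word `l`, the endpoint of the chord `a` marked `b₁` occurs before the one
marked `b₂`. -/
def EndpointsInOrder (b₁ b₂ : Bool) (a : ℕ) (l : GWord) : Prop :=
  ∃ (u v w : GWord) (s₁ s₂ : Bool), l = u ++ (a, b₁, s₁) :: (v ++ (a, b₂, s₂) :: w)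

namespace EndpointsInOrder

variable {b₁ b₂ : Bool} {a : ℕ} {l : GWord}

theorem mem_chordSet (h : EndpointsInOrder b₁ b₂ a l) : a ∈ chordSet l := by
  obtain ⟨u, v, w, s₁, s₂, rfl⟩ := h
  exact ⟨(a, b₁, s₁), by simp, rfl⟩

theorem reverse (h : EndpointsInOrder b₁ b₂ a l) : EndpointsInOrder b₂ b₁ a l.reverse := by
  obtain ⟨u, v, w, s₁, s₂, rfl⟩ := h
  exact ⟨w.reverse, v.reverse, u.reverse, s₂, s₁, by simp⟩

protected theorem crossingChange (S : Finset ℕ) (h : EndpointsInOrder b₁ b₂ a l) :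
    EndpointsInOrder (b₁ ^^ decide (a ∈ S)) (b₂ ^^ decide (a ∈ S)) a
      (crossingChange S l) := by
  obtain ⟨u, v, w, s₁, s₂, rfl⟩ := h
  refine ⟨crossingChange S u, crossingChange S v, crossingChange S w,
    s₁ ^^ decide (a ∈ S), s₂ ^^ decide (a ∈ S), ?_⟩
  by_cases ha : a ∈ S <;> simp [_root_.crossingChange, ha]

end EndpointsInOrder

theorem endpointsInOrder_reverse_iff {b₁ b₂ : Bool} {a : ℕ} {l : GWord} :
    EndpointsInOrder b₁ b₂ a l.reverse ↔ EndpointsInOrder b₂ b₁ a l :=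
  ⟨fun h => by simpa using h.reverse, EndpointsInOrder.reverse⟩

theorem endpointsInOrder_cons_iff {b₁ b₂ : Bool} {a : ℕ} {e : GEntry} {l : GWord}
    (ha : e.1 ≠ a) : EndpointsInOrder b₁ b₂ a (e :: l) ↔ EndpointsInOrder b₁ b₂ a l := by
  constructor
  · rintro ⟨_ | ⟨e', u⟩, v, w, s₁, s₂, h⟩
    · exact absurd (congrArg (·.1) (List.cons.inj h).1) ha
    · exact ⟨u, v, w, s₁, s₂, (List.cons.inj h).2⟩
  · rintro ⟨u, v, w, s₁, s₂, rfl⟩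
    exact ⟨e :: u, v, w, s₁, s₂, rfl⟩

theorem tailsFirst_iff {l : GWord} : TailsFirst l ↔ ∀ a, ¬ EndpointsInOrder true false a l :=
  ⟨fun h a ⟨u, v, w, s₁, s₂, e⟩ => h ⟨u, v, w, a, s₁, s₂, e⟩,
    fun h ⟨u, v, w, a, s₁, s₂, e⟩ => h a ⟨u, v, w, s₁, s₂, e⟩⟩

theorem crossingChange_involutive (S : Finset ℕ) : Function.Involutive (crossingChange S) := by
  intro l
  simp only [crossingChange, List.map_map]
  refine List.map_id'' (fun e => ?_) l
  by_cases he : e.1 ∈ S <;> simp [he]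

theorem crossingChange_rotate (S : Finset ℕ) (l : GWord) (n : ℕ) :
    crossingChange S (l.rotate n) = (crossingChange S l).rotate n :=
  List.map_rotate _ l n

theorem crossingChange_reverse (S : Finset ℕ) (l : GWord) :
    crossingChange S l.reverse = (crossingChange S l).reverse :=
  List.map_reverse

theorem List.Perm.chordSet_eq {l l' : GWord} (h : l.Perm l') : chordSet l = chordSet l' := by
  ext a
  exact exists_congr fun _ => and_congr_left' h.mem_iff

namespace IsGaussCode

variable {l : GWord}

theorem perm {l' : GWord} (hl : IsGaussCode l) (h : l.Perm l') : IsGaussCode l' := by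
  intro a ha
  rw [← h.chordSet_eq] at ha
  obtain ⟨hcount, σ, htail, hhead⟩ := hl a ha
  exact ⟨h.countP_eq _ ▸ hcount, σ, h.mem_iff.mp htail, h.mem_iff.mp hhead⟩

theorem endpointsInOrder_or (hl : IsGaussCode l) {a : ℕ} (ha : a ∈ chordSet l) :
    EndpointsInOrder true false a l ∨ EndpointsInOrder false true a l := by
  obtain ⟨-, σ, htail, hhead⟩ := hl a ha
  obtain ⟨p, q, rfl⟩ := List.append_of_mem htail
  rcases List.mem_append.mp hhead with hp | hq
  · obtain ⟨p₁, p₂, rfl⟩ := List.append_of_mem hp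
    exact Or.inl ⟨p₁, p₂, q, σ, σ, by simp⟩
  · obtain ⟨q₁, q₂, rfl⟩ := List.append_of_mem ((List.mem_cons.mp hq).resolve_left (by simp))
    exact Or.inr ⟨p, q₁, q₂, σ, σ, rfl⟩

theorem filter_eq_of_endpointsInOrder (hl : IsGaussCode l) {b₁ b₂ : Bool} {a : ℕ}
    (h : EndpointsInOrder b₁ b₂ a l) :
    ∃ s₁ s₂ : Bool, l.filter (·.1 == a) = [(a, b₁, s₁), (a, b₂, s₂)] := by
  have hcount := (hl a h.mem_chordSet).1
  obtain ⟨u, v, w, s₁, s₂, rfl⟩ := h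
  simp only [List.countP_append, List.countP_cons, beq_self_eq_true, if_true] at hcount
  have hnil : ∀ r : GWord, r.countP (·.1 == a) = 0 → r.filter (·.1 == a) = [] :=
    fun r hr => List.filter_eq_nil_iff.mpr (List.countP_eq_zero.mp hr)
  refine ⟨s₁, s₂, ?_⟩
  simp [List.filter_append, hnil u (by omega), hnil v (by omega), hnil w (by omega)]

theorem not_endpointsInOrder_iff (hl : IsGaussCode l) {a : ℕ} (ha : a ∈ chordSet l) :
    ¬ EndpointsInOrder true false a l ↔ EndpointsInOrder false true a l := by
  refine ⟨(hl.endpointsInOrder_or ha).resolve_left, fun h₂ h₁ => ?_⟩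
  obtain ⟨s₁, s₂, e₁⟩ := hl.filter_eq_of_endpointsInOrder h₁
  obtain ⟨t₁, t₂, e₂⟩ := hl.filter_eq_of_endpointsInOrder h₂
  simp [e₁] at e₂

theorem not_endpointsInOrder_cons_tail {a : ℕ} {s : Bool}
    (hl : IsGaussCode ((a, false, s) :: l)) :
    ¬ EndpointsInOrder true false a ((a, false, s) :: l) := by
  refine (hl.not_endpointsInOrder_iff ⟨_, List.mem_cons_self, rfl⟩).mpr ?_
  obtain ⟨-, σ, -, hhead⟩ := hl a ⟨_, List.mem_cons_self, rfl⟩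
  obtain ⟨v, w, rfl⟩ := List.append_of_mem ((List.mem_cons.mp hhead).resolve_left (by simp))
  exact ⟨[], v, w, s, σ, rfl⟩

theorem tailsFirst_crossingChange (hl : IsGaussCode l) {S : Finset ℕ}
    (hS : ∀ a, a ∈ S ↔ EndpointsInOrder true false a l) : TailsFirst (crossingChange S l) := by
  refine tailsFirst_iff.mpr fun a h => ?_
  have h' := h.crossingChange S
  rw [crossingChange_involutive] at h'
  by_cases ha : a ∈ S
  · simp only [ha, decide_true, Bool.true_xor, Bool.false_xor, Bool.not_true] at h'
    exact (hl.not_endpointsInOrder_iff h'.mem_chordSet).mpr h' ((hS a).mp ha)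
  · simp only [ha, decide_false, Bool.xor_false] at h'
    exact ha ((hS a).mpr h')

theorem endpointsInOrder_cons_reverse_iff {x : ℕ} {s : Bool}
    (hl : IsGaussCode ((x, false, s) :: l)) {a : ℕ} (hax : a ≠ x)
    (ha : a ∈ chordSet ((x, false, s) :: l)) :
    EndpointsInOrder true false a ((x, false, s) :: l.reverse) ↔
      ¬ EndpointsInOrder true false a ((x, false, s) :: l) := by
  rw [hl.not_endpointsInOrder_iff ha, endpointsInOrder_cons_iff hax.symm,
    endpointsInOrder_cons_iff hax.symm, endpointsInOrder_reverse_iff]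

end IsGaussCode

/-- Let `D` be a Gauss code and `x` a chord of `D` with tail
endpoint `t`; cut the cyclic word at `t`, so that (after a rotation) the word
reads `(x, false, s) :: rest`.  Let `S₁` be the set of chords whose head occurs
before its tail reading forward from `t`, and `S₂` the set of chords whose
head occurs before its tail reading in the reverse direction from `t` (i.e. in
the word `(x, false, s) :: rest.reverse`).  Then `S₁` and `S₂` are disjoint,
`S₁ ∪ S₂ = C \ {x}` where `C` is the chord set of `D`, and the crossing change
at `S₁` (respectively at `S₂`) transforms `D` into a descending code. -/
theorem two_descending_crossing_changes (D : GWord) (hD : IsGaussCode D)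
    (x : ℕ) (s : Bool) (n : ℕ) (rest : GWord)
    (hcut : D.rotate n = (x, false, s) :: rest)
    (S₁ S₂ : Finset ℕ)
    (hS₁ : ∀ a : ℕ, a ∈ S₁ ↔ ∃ (u v w : GWord) (s₁ s₂ : Bool),
      (x, false, s) :: rest = u ++ (a, true, s₁) :: (v ++ (a, false, s₂) :: w))
    (hS₂ : ∀ a : ℕ, a ∈ S₂ ↔ ∃ (u v w : GWord) (s₁ s₂ : Bool),
      (x, false, s) :: rest.reverse = u ++ (a, true, s₁) :: (v ++ (a, false, s₂) :: w)) :
    Disjoint S₁ S₂ ∧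
    (↑S₁ ∪ ↑S₂ : Set ℕ) = chordSet D \ {x} ∧
    IsDescending (crossingChange S₁ D) ∧
    IsDescending (crossingChange S₂ D) := by
  replace hS₁ : ∀ a, a ∈ S₁ ↔ EndpointsInOrder true false a ((x, false, s) :: rest) := hS₁
  replace hS₂ : ∀ a, a ∈ S₂ ↔ EndpointsInOrder true false a ((x, false, s) :: rest.reverse) :=
    hS₂
  have hperm : D.Perm ((x, false, s) :: rest) := hcut ▸ (D.rotate_perm n).symm
  have hperm' : D.Perm ((x, false, s) :: rest.reverse) :=
    hperm.trans (.cons _ rest.reverse_perm.symm)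
  have hw := hD.perm hperm
  have hw' := hD.perm hperm'
  have hx₁ : x ∉ S₁ := fun h => hw.not_endpointsInOrder_cons_tail ((hS₁ x).mp h)
  have hx₂ : x ∉ S₂ := fun h => hw'.not_endpointsInOrder_cons_tail ((hS₂ x).mp h)
  have hS₂_iff : ∀ a ∈ chordSet D, a ≠ x → (a ∈ S₂ ↔ a ∉ S₁) := fun a ha hax => by
    rw [hS₂, hS₁, ← hw.endpointsInOrder_cons_reverse_iff hax (hperm.chordSet_eq ▸ ha)]
  have hcut' : D.rotate (n + 1) = ((x, false, s) :: rest.reverse).reverse := by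
    rw [← List.rotate_rotate, hcut]
    simp
  refine ⟨Finset.disjoint_left.mpr fun {a} h₁ h₂ => ?_, ?_, ⟨n, Or.inl ?_⟩, ⟨n + 1, Or.inr ?_⟩⟩
  · have ha : a ∈ chordSet D := hperm.chordSet_eq ▸ ((hS₁ a).mp h₁).mem_chordSet
    exact (hS₂_iff a ha (ne_of_mem_of_not_mem h₁ hx₁)).mp h₂ h₁
  · ext a
    simp only [Set.mem_union, Finset.mem_coe, Set.mem_sdiff, Set.mem_singleton_iff]
    constructor
    · rintro (h | h)
      · exact ⟨hperm.chordSet_eq ▸ ((hS₁ a).mp h).mem_chordSet, ne_of_mem_of_not_mem h hx₁⟩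
      · exact ⟨hperm'.chordSet_eq ▸ ((hS₂ a).mp h).mem_chordSet, ne_of_mem_of_not_mem h hx₂⟩
    · rintro ⟨ha, hax⟩
      exact or_iff_not_imp_left.mpr (hS₂_iff a ha hax).mpr
  · rw [← crossingChange_rotate, hcut]
    exact hw.tailsFirst_crossingChange hS₁
  · rw [← crossingChange_rotate, hcut', crossingChange_reverse, List.reverse_reverse]
    exact hw'.tailsFirst_crossingChange hS₂
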